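/- arXiv:1602.07112 — 2 statements merged into one kernel-verified Lean document; each statement's English description precedes it below -/
import Mathlib

section
/- Let K ≥ 1, and let f = (f_1,...,f_K) be a vector of positive reals with ∑_k f_k = 1. Define a sequence π : ℕ → {1,...,K} recursively by choosing π_n ∈ argmin_k (d_k(n-1)+1)/f_k (ties broken arbitrarily), where d_k(n) = #{n' ≤ n : π_{n'} = k}. Then for all n ≥ 0 and all k, d_k(n) ≤ (n + K - 1)·f_k. -/
/-! If `π (n + 1)` minimises `(d j n + 1) / f j`, then `(d k n + 1) f j ≤ (d j n + 1) f k` for every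
`j`, where `k = π (n + 1)`; summing over `j` and using `∑ f = 1`, `∑ d j n = n` gives
`d k (n + 1) = d k n + 1 ≤ (n + K) f k`. Counters of the other indices do not move while their
bound grows, so induction on `n` closes the argument. -/

open Finset

section Counting

variable {α : Type*} [DecidableEq α] (π : ℕ → α)

theorem card_filter_Icc_succ (k : α) (n : ℕ) :
    #{m ∈ Icc 1 (n + 1) | π m = k} =
      #{m ∈ Icc 1 n | π m = k} + if π (n + 1) = k then 1 else 0 := by
  rw [← insert_Icc_right_eq_Icc_add_one (by omega), filter_insert]
  split_ifs <;> simp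

theorem sum_card_filter_Icc [Fintype α] (n : ℕ) : ∑ k, #{m ∈ Icc 1 n | π m = k} = n := by
  rw [← card_eq_sum_card_fiberwise fun m _ => mem_univ (π m)]
  simp

end Counting

theorem add_one_le_mul_of_forall_div_le {ι : Type*} [Fintype ι] {f c : ι → ℝ}
    (hf : ∀ j, 0 < f j) (hsum : ∑ j, f j = 1) {k : ι}
    (hk : ∀ j, (c k + 1) / f k ≤ (c j + 1) / f j) :
    c k + 1 ≤ (∑ j, c j + Fintype.card ι) * f k :=
  calc c k + 1 = ∑ j, (c k + 1) * f j := by rw [← mul_sum, hsum, mul_one]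
    _ ≤ ∑ j, (c j + 1) * f k :=
      sum_le_sum fun j _ => (div_le_div_iff₀ (hf k) (hf j)).mp (hk j)
    _ = (∑ j, c j + Fintype.card ι) * f k := by simp [← sum_mul, sum_add_distrib]

theorem greedy_is_upper_balanced_general
    (K : ℕ) (f : Fin K → ℝ)
    (hf : ∀ k, 0 < f k) (hsum : ∑ k, f k = 1)
    (π : ℕ → Fin K)
    (d : Fin K → ℕ → ℕ)
    (hd : ∀ k n, d k n = ((Finset.Icc 1 n).filter (fun m => π m = k)).card)
    (hgreedy : ∀ n, 1 ≤ n → ∀ k,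
      ((d (π n) (n - 1) : ℝ) + 1) / f (π n) ≤ ((d k (n - 1) : ℝ) + 1) / f k) :
    ∀ n k, (d k n : ℝ) ≤ ((n : ℝ) + K - 1) * f k := by
  have hstep : ∀ n k, d k (n + 1) = d k n + if π (n + 1) = k then 1 else 0 := fun n k => by
    simp only [hd, card_filter_Icc_succ]
  have htotal : ∀ n, ∑ k, (d k n : ℝ) = n := fun n => by
    simp only [hd]
    exact_mod_cast sum_card_filter_Icc π n
  intro n k
  induction n generalizing k with
  | zero =>
    have hK : (1 : ℝ) ≤ K := by exact_mod_cast k.pos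
    simp only [hd, Icc_eq_empty_of_lt zero_lt_one, filter_empty, card_empty, CharP.cast_eq_zero]
    nlinarith [hf k]
  | succ n ih =>
    rw [hstep]
    split_ifs with hk
    · subst hk
      have := add_one_le_mul_of_forall_div_le hf hsum (c := fun j => (d j n : ℝ))
        (hgreedy (n + 1) (by omega))
      simp only [htotal, Fintype.card_fin] at this
      push_cast
      linarith
    · push_cast
      nlinarith [ih k, hf k]

/-- The greedy chunk-request sequence is `f`-upper balanced:
`d k n ≤ (n + K - 1) * f k` for all `n, k`. -/
theorem greedy_is_upper_balanced
    (K : ℕ) (hK : 1 ≤ K) (f : Fin K → ℝ)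
    (hf : ∀ k, 0 < f k) (hsum : ∑ k, f k = 1)
    (π : ℕ → Fin K)
    (d : Fin K → ℕ → ℕ)
    (hd : ∀ k n, d k n = ((Finset.Icc 1 n).filter (fun m => π m = k)).card)
    (hgreedy : ∀ n, 1 ≤ n → ∀ k,
      ((d (π n) (n - 1) : ℝ) + 1) / f (π n) ≤ ((d k (n - 1) : ℝ) + 1) / f k) :
    ∀ n k, (d k n : ℝ) ≤ ((n : ℝ) + K - 1) * f k :=
  greedy_is_upper_balanced_general K f hf hsum π d hd hgreedy
end

section
/- Let K ≥ 1 and f_1,...,f_K > 0 with ∑_k f_k = 1, and let π be the greedy sequence defined by π_n ∈ argmin_k (d_k(n-1)+1)/f_k. Then for every n ≥ 1, the value a(n) = (d_{π_n}(n-1)+1)/f_{π_n} satisfies a(n) ≤ n - 1 + K. -/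
/-!
The greedy value `a` is the minimum of the ratios `(d_k(n-1) + 1) / f_k`, so `a f_k ≤ d_k(n-1) + 1`
for every `k`. Summing over `k` and using `∑ f_k = 1` gives `a ≤ ∑_k (d_k(n-1) + 1) = (n - 1) + K`,
since the first `n - 1` terms of the sequence are split among the `K` counters.
-/

open Finset

theorem sum_card_filter_Icc_eq {ι : Type*} [Fintype ι] [DecidableEq ι] (π : ℕ → ι) (n : ℕ) :
    ∑ k, #{m ∈ Icc 1 n | π m = k} = n := by
  rw [← card_eq_sum_card_fiberwise fun m _ => mem_univ (π m), Nat.card_Icc, Nat.add_sub_cancel]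

theorem le_sum_of_le_div_of_sum_eq_one {ι : Type*} [Fintype ι] {f c : ι → ℝ} {a : ℝ}
    (hf : ∀ k, 0 < f k) (hsum : ∑ k, f k = 1) (ha : ∀ k, a ≤ c k / f k) :
    a ≤ ∑ k, c k :=
  calc a = ∑ k, a * f k := by rw [← mul_sum, hsum, mul_one]
    _ ≤ ∑ k, c k := sum_le_sum fun k _ => (le_div_iff₀ (hf k)).mp (ha k)

theorem greedy_value_le_general
    (K : ℕ) (f : Fin K → ℝ)
    (hf : ∀ k, 0 < f k) (hsum : ∑ k, f k = 1)
    (π : ℕ → Fin K)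
    (d : Fin K → ℕ → ℕ)
    (hd : ∀ k n, d k n = ((Finset.Icc 1 n).filter (fun m => π m = k)).card)
    (hgreedy : ∀ n, 1 ≤ n → ∀ k,
      ((d (π n) (n - 1) : ℝ) + 1) / f (π n) ≤ ((d k (n - 1) : ℝ) + 1) / f k) :
    ∀ n, 1 ≤ n → ((d (π n) (n - 1) : ℝ) + 1) / f (π n) ≤ (n : ℝ) - 1 + K := by
  intro n hn
  have hcount : ∑ k, d k (n - 1) = n - 1 := by
    simp only [hd]
    exact sum_card_filter_Icc_eq π (n - 1)
  calc ((d (π n) (n - 1) : ℝ) + 1) / f (π n)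
      ≤ ∑ k, ((d k (n - 1) : ℝ) + 1) := le_sum_of_le_div_of_sum_eq_one hf hsum (hgreedy n hn)
    _ = (n : ℝ) - 1 + K := by
      rw [sum_add_distrib, ← Nat.cast_sum, hcount, Nat.cast_sub hn]
      simp

/-- For the greedy sequence, `a(n) = (d_{π_n}(n-1)+1)/f_{π_n} ≤ n - 1 + K`. -/
theorem greedy_value_le
    (K : ℕ) (hK : 1 ≤ K) (f : Fin K → ℝ)
    (hf : ∀ k, 0 < f k) (hsum : ∑ k, f k = 1)
    (π : ℕ → Fin K)
    (d : Fin K → ℕ → ℕ)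
    (hd : ∀ k n, d k n = ((Finset.Icc 1 n).filter (fun m => π m = k)).card)
    (hgreedy : ∀ n, 1 ≤ n → ∀ k,
      ((d (π n) (n - 1) : ℝ) + 1) / f (π n) ≤ ((d k (n - 1) : ℝ) + 1) / f k) :
    ∀ n, 1 ≤ n → ((d (π n) (n - 1) : ℝ) + 1) / f (π n) ≤ (n : ℝ) - 1 + K :=
  greedy_value_le_general K f hf hsum π d hd hgreedy
end
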